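/- The thinning map is measurable: for every δ > 0, the map T_δ : 𝕄^d → 𝕄^d defined by T_δ(Y) = {(y,ρ) ∈ Y : min{d_Y(y)/2, 1/ρ} < δ} is measurable with respect to the σ-algebra 𝓜^d generated by the evaluation maps Y ↦ card(Y ∩ E), E Borel in ℝ^d × ℝ⁺. -/

import Mathlib

open MeasureTheory Set Metric Filter
open scoped ENNReal Pointwise symmDiff

noncomputable section

/-- Locations of points: `ℝ^d`. -/
abbrev Rd (d : ℕ) := EuclideanSpace ℝ (Fin d)

/-- A configuration of marked points: a set of (location, mark) pairs. -/
structure Config (d : ℕ) where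
  pts : Set (Rd d × ℝ)

/-- Admissibility: positive marks, a unique mark per location, and locally finitely
many points. -/
def Admissible {d : ℕ} (Y : Set (Rd d × ℝ)) : Prop :=
  (∀ p ∈ Y, 0 < p.2) ∧
  (∀ y ρ₁ ρ₂, (y, ρ₁) ∈ Y → (y, ρ₂) ∈ Y → ρ₁ = ρ₂) ∧
  (∀ B : Set (Rd d), Bornology.IsBounded B → (Y ∩ B ×ˢ univ).Finite)

/-- The σ-algebra on configurations generated by the counting evaluations
`Y ↦ card (Y ∩ E)`, `E` Borel. -/
instance configMeasurableSpace (d : ℕ) : MeasurableSpace (Config d) :=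
  MeasurableSpace.generateFrom
    {A : Set (Config d) | ∃ (E : Set (Rd d × ℝ)) (n : ℕ∞),
      MeasurableSet E ∧ A = {Y | (Y.pts ∩ E).encard = n}}

/-- Translation of a configuration by `τ` (marks unchanged). -/
def mppTranslate {d : ℕ} (τ : Rd d) (Y : Config d) : Config d :=
  ⟨(fun p => (p.1 + τ, p.2)) '' Y.pts⟩

/-- A marked point process `M` is stationary if its law is invariant under translations. -/
def Stationary {d : ℕ} {Ω : Type*} [MeasurableSpace Ω] (ℙ : Measure Ω)
    (M : Ω → Config d) : Prop :=
  ∀ τ : Rd d, Measure.map (fun ω => mppTranslate τ (M ω)) ℙ = Measure.map M ℙ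

/-- Finite intensity: the expected number of points in any bounded Borel region is finite. -/
def FiniteIntensity {d : ℕ} {Ω : Type*} [MeasurableSpace Ω] (ℙ : Measure Ω)
    (M : Ω → Config d) : Prop :=
  ∀ B : Set (Rd d), Bornology.IsBounded B → MeasurableSet B →
    ∫⁻ ω, (((M ω).pts ∩ B ×ˢ univ).encard : ℝ≥0∞) ∂ℙ < ⊤

/-- The `δ`-thinning of a configuration: keep exactly the points `(y, ρ)` with
`min {d_Y(y)/2, 1/ρ} < δ`, i.e. those having another point within distance `< 2δ`
or mark larger than `1/δ`. -/
def thinSet {d : ℕ} (δ : ℝ) (Y : Set (Rd d × ℝ)) : Set (Rd d × ℝ) :=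
  {p | p ∈ Y ∧ ((∃ q ∈ Y, q.1 ≠ p.1 ∧ dist p.1 q.1 < 2 * δ) ∨ 1 / p.2 < δ)}

/-- The thinning map on configurations. -/
def thinC {d : ℕ} (δ : ℝ) (Y : Config d) : Config d := ⟨thinSet δ Y.pts⟩

/-!
It suffices that `Y ↦ card (T_δ(Y) ∩ E)` is measurable for Borel `E`. Whether `T_δ(Y)` meets a
Borel set `F` is a countable Boolean combination of occupancy events `Y ∩ G ≠ ∅`: a point of
`Y ∩ F` is kept either because its mark exceeds `1/δ`, or because it and another point lie in two
distinct dyadic cubes any two points of which are closer than `2δ`. Since the points of an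
admissible configuration have distinct locations, fine dyadic cubes separate any finitely many of
them, so `card (T_δ(Y) ∩ E)` is the supremum over `k` of the number of level-`k` cubes `C` with
`T_δ(Y) ∩ E ∩ (C × ℝ) ≠ ∅`.
-/

open scoped Topology

theorem Measurable.iSup_of_discrete {α β : Type*} [MeasurableSpace α] [CompleteLinearOrder β]
    [Countable β] [MeasurableSpace β] [DiscreteMeasurableSpace β] {f : ℕ → α → β}
    (hf : ∀ k, Measurable (f k)) : Measurable fun a => ⨆ k, f k a := by
  have hle : ∀ y : β, MeasurableSet {a | ⨆ k, f k a ≤ y} := fun y => by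
    simp only [iSup_le_iff, ofPred_forall]
    exact .iInter fun k => hf k (.of_discrete (s := Iic y))
  refine measurable_to_countable' fun x => ?_
  have hfiber : (fun a => ⨆ k, f k a) ⁻¹' {x} =
      {a | ⨆ k, f k a ≤ x} \ ⋃ y : β, ⋃ (_ : y < x), {a | ⨆ k, f k a ≤ y} := by
    ext a
    simp only [mem_preimage, mem_singleton_iff, Set.mem_sdiff, mem_ofPred_eq, mem_iUnion,
      not_exists, not_le]
    exact ⟨fun h => ⟨h.le, fun y hy => hy.trans_eq h.symm⟩,
      fun ⟨h, hlt⟩ => h.antisymm (le_of_forall_lt hlt)⟩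
  rw [hfiber]
  exact (hle x).diff (.iUnion fun y => .iUnion fun _ => hle y)

theorem Set.encard_eq_iSup_encard_image {α β : Type*} {s : Set α} {f : ℕ → α → β}
    (hf : ∀ x ∈ s, ∀ y ∈ s, x ≠ y → ∀ᶠ k in atTop, f k x ≠ f k y) :
    s.encard = ⨆ k, (f k '' s).encard := by
  refine le_antisymm (ENat.forall_natCast_le_iff_le.1 fun n hn => ?_)
    (iSup_le fun k => encard_image_le _ _)
  obtain ⟨t, hts, htn⟩ := exists_subset_encard_eq hn
  have ht : t.Finite := finite_of_encard_eq_coe htn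
  have hinj : ∀ᶠ k in atTop, InjOn (f k) t :=
    ht.eventually_all.2 fun x hx => ht.eventually_all.2 fun y hy =>
      (eventually_imp_distrib_left.2 fun hxy => hf x (hts hx) y (hts hy) hxy).mono
        fun _ h hfxy => not_not.1 fun hxy => h hxy hfxy
  obtain ⟨k, hk⟩ := hinj.exists
  calc (n : ℕ∞) = (f k '' t).encard := by rw [hk.encard_image, htn]
    _ ≤ (f k '' s).encard := encard_le_encard (image_mono hts)
    _ ≤ ⨆ k, (f k '' s).encard := le_iSup (fun k => (f k '' s).encard) k

section Dyadic

variable {ι : Type*} [Fintype ι]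

def dyadicIndex (k : ℕ) (x : EuclideanSpace ℝ ι) : ι → ℤ := fun j => ⌊2 ^ k * x j⌋

def dyadicCell (k : ℕ) (z : ι → ℤ) : Set (EuclideanSpace ℝ ι) := dyadicIndex k ⁻¹' {z}

theorem measurable_dyadicIndex (k : ℕ) : Measurable (dyadicIndex (ι := ι) k) :=
  measurable_pi_lambda _ fun j =>
    Int.measurable_floor.comp ((EuclideanSpace.proj j).continuous.measurable.const_mul _)

theorem measurableSet_dyadicCell (k : ℕ) (z : ι → ℤ) : MeasurableSet (dyadicCell k z) :=
  measurable_dyadicIndex k (measurableSet_singleton z)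

theorem dist_le_of_dyadicIndex_eq {k : ℕ} {x y : EuclideanSpace ℝ ι}
    (h : dyadicIndex k x = dyadicIndex k y) : dist x y ≤ √(Fintype.card ι) * (1 / 2) ^ k := by
  have hcoord : ∀ j, dist (x j) (y j) ≤ (1 / 2) ^ k := fun j => by
    have h2k : (0 : ℝ) < 2 ^ k := by positivity
    have := Int.abs_sub_lt_one_of_floor_eq_floor (congrFun h j)
    rw [← mul_sub, abs_mul, abs_of_pos h2k] at this
    rw [Real.dist_eq, div_pow, one_pow, le_div_iff₀ h2k]
    linarith
  calc dist x y = √(∑ j, dist (x j) (y j) ^ 2) := EuclideanSpace.dist_eq x y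
    _ ≤ √(∑ _j : ι, ((1 / 2 : ℝ) ^ k) ^ 2) :=
      Real.sqrt_le_sqrt (Finset.sum_le_sum fun j _ => pow_le_pow_left₀ dist_nonneg (hcoord j) 2)
    _ = √(Fintype.card ι) * (1 / 2) ^ k := by
      rw [Finset.sum_const, Finset.card_univ, nsmul_eq_mul, Real.sqrt_mul (Nat.cast_nonneg _),
        Real.sqrt_sq (by positivity)]

theorem eventually_dist_lt_of_dyadicIndex_eq {ε : ℝ} (hε : 0 < ε) :
    ∀ᶠ k in atTop, ∀ x y : EuclideanSpace ℝ ι,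
      dyadicIndex k x = dyadicIndex k y → dist x y < ε := by
  have hlim : Tendsto (fun k : ℕ => √(Fintype.card ι) * (1 / 2 : ℝ) ^ k) atTop (𝓝 0) := by
    simpa using (tendsto_pow_atTop_nhds_zero_of_lt_one (by norm_num : (0 : ℝ) ≤ 1 / 2)
      (by norm_num)).const_mul (√(Fintype.card ι))
  filter_upwards [hlim.eventually (gt_mem_nhds hε)] with k hk x y hxy
  exact (dist_le_of_dyadicIndex_eq hxy).trans_lt hk

theorem eventually_dyadicIndex_ne {x y : EuclideanSpace ℝ ι} (hxy : x ≠ y) :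
    ∀ᶠ k in atTop, dyadicIndex k x ≠ dyadicIndex k y :=
  (eventually_dist_lt_of_dyadicIndex_eq (dist_pos.2 hxy)).mono fun _ hk h =>
    (hk x y h).false

end Dyadic

theorem exists_close_pair_iff_exists_dyadicCell {ι β : Type*} [Fintype ι]
    {Y F : Set (EuclideanSpace ℝ ι × β)} {r : ℝ} :
    (∃ p ∈ Y ∩ F, ∃ q ∈ Y, q.1 ≠ p.1 ∧ dist p.1 q.1 < r) ↔
      ∃ (k : ℕ) (z w : ι → ℤ), (z ≠ w ∧
        ∀ x ∈ dyadicCell k z, ∀ y ∈ dyadicCell k w, dist x y < r) ∧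
        (Y ∩ F ∩ Prod.fst ⁻¹' dyadicCell k z).Nonempty ∧
        (Y ∩ Prod.fst ⁻¹' dyadicCell k w).Nonempty := by
  constructor
  · rintro ⟨p, hp, q, hq, hqp, hpq⟩
    -- cells of diameter `< ε` separate `p` and `q`, and any two of their points are `< r` apart
    set ε := min (dist p.1 q.1) ((r - dist p.1 q.1) / 2)
    have hε : 0 < ε := lt_min (dist_pos.2 hqp.symm) (by linarith)
    obtain ⟨k, hk⟩ := (eventually_dist_lt_of_dyadicIndex_eq (ι := ι) hε).exists
    refine ⟨k, _, _, ⟨fun h => (hk _ _ h).not_ge (min_le_left _ _), fun x hx y hy => ?_⟩,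
      ⟨p, hp, rfl⟩, ⟨q, hq, rfl⟩⟩
    have hxp := hk x p.1 hx
    have hyq := hk y q.1 hy
    have := min_le_right (dist p.1 q.1) ((r - dist p.1 q.1) / 2)
    calc dist x y ≤ dist x p.1 + dist p.1 q.1 + dist q.1 y := dist_triangle4 _ _ _ _
      _ < r := by rw [dist_comm q.1 y]; linarith
  · rintro ⟨k, z, w, ⟨hzw, hclose⟩, ⟨p, hp, (hpz : dyadicIndex k p.1 = z)⟩,
      ⟨q, hq, (hqw : dyadicIndex k q.1 = w)⟩⟩
    exact ⟨p, hp, q, hq, fun h => hzw (by rw [← hpz, ← hqw, h]), hclose _ hpz _ hqw⟩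

theorem Admissible.injOn_fst {d : ℕ} {Y : Set (Rd d × ℝ)} (hY : Admissible Y) :
    InjOn Prod.fst Y := fun p hp q hq h =>
  Prod.ext h (hY.2.1 p.1 p.2 q.2 hp (h ▸ hq))

theorem thinSet_inter_nonempty_iff {d : ℕ} {δ : ℝ} {Y F : Set (Rd d × ℝ)} :
    (thinSet δ Y ∩ F).Nonempty ↔ (Y ∩ F ∩ {p | 1 / p.2 < δ}).Nonempty ∨
      ∃ p ∈ Y ∩ F, ∃ q ∈ Y, q.1 ≠ p.1 ∧ dist p.1 q.1 < 2 * δ := by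
  constructor
  · rintro ⟨p, ⟨hpY, ⟨q, hq, hne, hd⟩ | hmark⟩, hpF⟩
    · exact Or.inr ⟨p, ⟨hpY, hpF⟩, q, hq, hne, hd⟩
    · exact Or.inl ⟨p, ⟨hpY, hpF⟩, hmark⟩
  · rintro (⟨p, ⟨hpY, hpF⟩, hmark⟩ | ⟨p, ⟨hpY, hpF⟩, hq⟩)
    · exact ⟨p, ⟨hpY, Or.inr hmark⟩, hpF⟩
    · exact ⟨p, ⟨hpY, Or.inl hq⟩, hpF⟩

theorem measurable_inter_nonempty {d : ℕ} {G : Set (Rd d × ℝ)} (hG : MeasurableSet G) :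
    Measurable fun Y : Config d => (Y.pts ∩ G).Nonempty := by
  have hzero : MeasurableSet {Y : Config d | (Y.pts ∩ G).encard = 0} :=
    MeasurableSpace.measurableSet_generateFrom ⟨G, 0, hG, rfl⟩
  have hset : {Y : Config d | (Y.pts ∩ G).Nonempty} = {Y | (Y.pts ∩ G).encard = 0}ᶜ := by
    ext Y
    simp [encard_eq_zero, nonempty_iff_ne_empty]
  exact measurableSet_setOfPred.1 (hset ▸ hzero.compl)

theorem measurable_thinSet_inter_nonempty {d : ℕ} (δ : ℝ) {F : Set (Rd d × ℝ)}
    (hF : MeasurableSet F) : Measurable fun Y : Config d => (thinSet δ Y.pts ∩ F).Nonempty := by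
  have hcell : ∀ k (z : Fin d → ℤ), MeasurableSet
      (Prod.fst ⁻¹' dyadicCell k z : Set (Rd d × ℝ)) :=
    fun k z => measurable_fst (measurableSet_dyadicCell k z)
  simp_rw [thinSet_inter_nonempty_iff, exists_close_pair_iff_exists_dyadicCell, inter_assoc]
  refine (measurable_inter_nonempty (hF.inter ?_)).or <| .exists fun k => .exists fun z =>
    .exists fun w => measurable_const.and <|
      (measurable_inter_nonempty (hF.inter (hcell k z))).and
        (measurable_inter_nonempty (hcell k w))
  exact measurable_const.div measurable_snd measurableSet_Iio

theorem measurable_encard_thinSet_inter {d : ℕ} (δ : ℝ) {E : Set (Rd d × ℝ)}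
    (hE : MeasurableSet E) :
    Measurable fun Y : {Y : Config d // Admissible Y.pts} =>
      (thinSet δ Y.1.pts ∩ E).encard := by
  have hcount (Y : {Y : Config d // Admissible Y.pts}) : (thinSet δ Y.1.pts ∩ E).encard =
      ⨆ k, {z | (thinSet δ Y.1.pts ∩ (E ∩ Prod.fst ⁻¹' dyadicCell k z)).Nonempty}.encard := by
    rw [encard_eq_iSup_encard_image (f := fun k p => dyadicIndex k p.1)]
    · congr! 3 with k
      ext z
      exact ⟨fun ⟨p, ⟨hpT, hpE⟩, hpz⟩ => ⟨p, hpT, hpE, hpz⟩,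
        fun ⟨p, hpT, hpE, hpz⟩ => ⟨p, ⟨hpT, hpE⟩, hpz⟩⟩
    intro p hp q hq hpq
    exact eventually_dyadicIndex_ne (Y.2.injOn_fst.ne hp.1.1 hq.1.1 hpq)
  simp_rw [hcount]
  exact Measurable.iSup_of_discrete fun k => measurable_encard.comp <| measurable_set_iff.2
    fun z => (measurable_thinSet_inter_nonempty δ
      (hE.inter (measurable_fst (measurableSet_dyadicCell k z)))).comp measurable_subtype_coe

theorem thinning_measurable_general {d : ℕ} (δ : ℝ) :
    Measurable (fun Y : {Y : Config d // Admissible Y.pts} => thinC δ (Y : Config d)) := by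
  refine measurable_generateFrom ?_
  rintro _ ⟨E, n, hE, rfl⟩
  exact measurable_encard_thinSet_inter δ hE (measurableSet_singleton n)

/-- The thinning map `T_δ : 𝕄^d → 𝕄^d` is measurable with respect to the σ-algebra
generated by the counting evaluations (the domain being the admissible configurations,
with the induced σ-algebra). -/
theorem thinning_measurable {d : ℕ} (δ : ℝ) (hδ : 0 < δ) :
    Measurable (fun Y : {Y : Config d // Admissible Y.pts} => thinC δ (Y : Config d)) :=
  thinning_measurable_general δ

end
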